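/- arXiv:1201.0632 — 6 statements merged into one kernel-verified Lean document; each statement's English description precedes it below -/
import Mathlib

section
/- Let X be a compact metric space equipped with a Borel probability measure m, let f : X → X be continuous, and let ε > 0. Suppose there exist pairwise disjoint open sets U_1, …, U_N with f(closure U_j) ⊆ U_j and m(U_j) < ε for every j, and m(U_1 ∪ … ∪ U_N) > 1 − ε. Then every Borel probability measure μ on X satisfies m(B(μ)) < 2ε; in particular, if ε ≤ 1/2 then f has no physical measure with basin of measure at least 2ε. -/
open MeasureTheory Filter Topology ENNReal Function

noncomputable section

variable {X : Type*} [MetricSpace X] [CompactSpace X] [MeasurableSpace X] [BorelSpace X]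

/-- The `n`-th Birkhoff average of the observable `φ` along the orbit of `x` under `f`. -/
def birkhoffAvg (f : X → X) (φ : X → ℝ) (x : X) (n : ℕ) : ℝ :=
  (n : ℝ)⁻¹ * ∑ j ∈ Finset.range n, φ (f^[j] x)

/-- `μ` is the Birkhoff limit of the point `x` under `f`: the probability measures
`(1/n) ∑_{j<n} δ_{f^j x}` converge to `μ` in the weak* topology, i.e. the Birkhoff averages of
every continuous observable converge to the corresponding integral. -/
def IsBirkhoffLimit (f : X → X) (x : X) (μ : Measure X) : Prop :=
  IsProbabilityMeasure μ ∧
    ∀ φ : C(X, ℝ), Tendsto (birkhoffAvg f φ x) atTop (𝓝 (∫ y, φ y ∂μ))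

/-- The basin of a measure `μ`: the set of points whose Birkhoff limit exists and equals `μ`. -/
def basin (f : X → X) (μ : Measure X) : Set X := {x | IsBirkhoffLimit f x μ}

/-!
Two points whose forward orbits end up in disjoint closed sets `K` and `L` have different
Birkhoff limits: an Urysohn function equal to `0` on `K` and `1` on `L` has Birkhoff averages
tending to `0` along one orbit and to `1` along the other. Since a trapping region `U` sends its
closure into the compact set `f '' closure U ⊆ U`, the basin of a measure `μ` meets at most one of
the disjoint trapping regions `U j`. Hence the basin lies in the complement of `⋃ j, U j`, of
measure `< ε`, together with a single `U j`, of measure `< ε`.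
-/

def IsTrappingRegion {α : Type*} [TopologicalSpace α] (f : α → α) (U : Set α) : Prop :=
  f '' closure U ⊆ U

lemma IsTrappingRegion.eventually_iterate_mem {α : Type*} [TopologicalSpace α] {f : α → α}
    {U : Set α} (hU : IsTrappingRegion f U) {x : α} (hx : x ∈ U) :
    ∀ᶠ n in atTop, f^[n] x ∈ f '' closure U := by
  have hmaps : Set.MapsTo f U U := fun y hy => hU ⟨y, subset_closure hy, rfl⟩
  filter_upwards [eventually_ge_atTop 1] with n hn
  obtain ⟨k, rfl⟩ := Nat.exists_eq_add_of_le' hn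
  rw [iterate_succ_apply']
  exact Set.mem_image_of_mem f (subset_closure (hmaps.iterate k hx))

lemma integral_eq_of_tendsto_iterate {α : Type*} [MetricSpace α] [MeasurableSpace α]
    {f : α → α} {μ : Measure α} {x : α} (hx : x ∈ basin f μ) (φ : C(α, ℝ)) {c : ℝ}
    (hφ : Tendsto (fun n => φ (f^[n] x)) atTop (𝓝 c)) :
    ∫ y, φ y ∂μ = c :=
  tendsto_nhds_unique (hx.2 φ) hφ.cesaro

lemma not_eventually_mem_of_mem_basin {α : Type*} [MetricSpace α] [MeasurableSpace α]
    {f : α → α} {μ : Measure α} {K L : Set α} (hK : IsClosed K) (hL : IsClosed L)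
    (hKL : Disjoint K L) {x y : α} (hx : x ∈ basin f μ) (hy : y ∈ basin f μ)
    (hxK : ∀ᶠ n in atTop, f^[n] x ∈ K) : ¬ ∀ᶠ n in atTop, f^[n] y ∈ L := by
  intro hyL
  obtain ⟨φ, hφK, hφL, -⟩ := exists_continuous_zero_one_of_isClosed hK hL hKL
  have hx0 : ∫ z, φ z ∂μ = 0 :=
    integral_eq_of_tendsto_iterate hx φ <| tendsto_const_nhds.congr' <|
      hxK.mono fun n hn => (hφK hn).symm
  have hy1 : ∫ z, φ z ∂μ = 1 :=
    integral_eq_of_tendsto_iterate hy φ <| tendsto_const_nhds.congr' <|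
      hyL.mono fun n hn => (hφL hn).symm
  exact zero_ne_one (hx0.symm.trans hy1)

lemma disjoint_basin_of_isTrappingRegion {α : Type*} [MetricSpace α] [CompactSpace α]
    [MeasurableSpace α] {f : α → α} (hf : Continuous f) {μ : Measure α} {U V : Set α}
    (hU : IsTrappingRegion f U) (hV : IsTrappingRegion f V) (hUV : Disjoint U V)
    (hμU : (basin f μ ∩ U).Nonempty) : Disjoint (basin f μ) V := by
  obtain ⟨x, hx, hxU⟩ := hμU
  have hcompact : ∀ W : Set α, IsCompact (f '' closure W) := fun W =>
    isClosed_closure.isCompact.image hf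
  refine Set.disjoint_left.2 fun y hy hyV => ?_
  exact not_eventually_mem_of_mem_basin (hcompact U).isClosed (hcompact V).isClosed
    (hUV.mono hU hV) hx hy (hU.eventually_iterate_mem hxU) (hV.eventually_iterate_mem hyV)

lemma measure_basin_inter_iUnion_lt {α : Type*} [MetricSpace α] [CompactSpace α]
    [MeasurableSpace α] {f : α → α} (hf : Continuous f) (m μ : Measure α) {ι : Type*}
    {U : ι → Set α} (hdisj : Pairwise (Disjoint on U)) (htrap : ∀ j, IsTrappingRegion f (U j))
    {a : ℝ≥0∞} (ha : 0 < a) (hsmall : ∀ j, m (U j) < a) :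
    m (basin f μ ∩ ⋃ j, U j) < a := by
  by_cases hmeets : ∃ j, (basin f μ ∩ U j).Nonempty
  · obtain ⟨j, hj⟩ := hmeets
    have hsub : basin f μ ∩ ⋃ k, U k ⊆ U j := by
      rintro y ⟨hy, hyU⟩
      obtain ⟨k, hk⟩ := Set.mem_iUnion.1 hyU
      obtain rfl | hkj := eq_or_ne k j
      · exact hk
      · exact absurd hk <| Set.disjoint_left.1
          (disjoint_basin_of_isTrappingRegion hf (htrap j) (htrap k) (hdisj hkj.symm) hj) hy
    exact (measure_mono hsub).trans_lt (hsmall j)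
  · simp only [not_exists, Set.not_nonempty_iff_eq_empty] at hmeets
    simpa [Set.inter_iUnion, hmeets] using ha

/-- If a continuous map `f` of a compact metric space with a Borel probability measure `m`
admits pairwise disjoint open trapping regions `U 0, …, U (N-1)`, each of `m`-measure `< ε`,
whose union has `m`-measure `> 1 - ε`, then every Borel probability measure has basin of
`m`-measure `< 2ε`; in particular, if `ε ≤ 1/2` then `f` has no physical measure whose basin
has measure at least `2ε`. -/
theorem basin_measure_lt_of_trapping_regions
    {f : X → X} (hf : Continuous f) (m : Measure X) (hm : IsProbabilityMeasure m)
    {ε : ℝ} (hε : 0 < ε) {N : ℕ} {U : Fin N → Set X}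
    (hopen : ∀ j, IsOpen (U j)) (hdisj : Pairwise (Disjoint on U))
    (htrap : ∀ j, f '' closure (U j) ⊆ U j)
    (hsmall : ∀ j, m (U j) < ENNReal.ofReal ε)
    (hbig : m (⋃ j, U j) > 1 - ENNReal.ofReal ε) :
    (∀ μ : Measure X, IsProbabilityMeasure μ → m (basin f μ) < ENNReal.ofReal (2 * ε)) ∧
      (ε ≤ 1 / 2 → ∀ μ : Measure X, IsProbabilityMeasure μ →
        ¬ ENNReal.ofReal (2 * ε) ≤ m (basin f μ)) := by
  have hmeas : MeasurableSet (⋃ j, U j) := .iUnion fun j => (hopen j).measurableSet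
  have hcompl : m (⋃ j, U j)ᶜ < ENNReal.ofReal ε := by
    rw [prob_compl_eq_one_sub hmeas]
    exact ENNReal.sub_lt_of_sub_lt prob_le_one (.inl one_ne_top) hbig
  have htwo : ENNReal.ofReal ε + ENNReal.ofReal ε = ENNReal.ofReal (2 * ε) := by
    rw [← ENNReal.ofReal_add hε.le hε.le, two_mul]
  have hbasin (μ : Measure X) : m (basin f μ) < ENNReal.ofReal (2 * ε) :=
    calc m (basin f μ) ≤ m (basin f μ ∩ ⋃ j, U j) + m (basin f μ \ ⋃ j, U j) :=
          measure_le_inter_add_sdiff _ _ _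
      _ ≤ m (basin f μ ∩ ⋃ j, U j) + m (⋃ j, U j)ᶜ := by
          gcongr; exact Set.sdiff_subset_compl _ _
      _ < ENNReal.ofReal ε + ENNReal.ofReal ε :=
          ENNReal.add_lt_add (measure_basin_inter_iUnion_lt hf m μ hdisj htrap
            (ENNReal.ofReal_pos.2 hε) hsmall) hcompl
      _ = ENNReal.ofReal (2 * ε) := htwo
  exact ⟨fun μ _ => hbasin μ, fun _ μ _ => not_le.2 (hbasin μ)⟩

end
end

section
/- Let X be a compact metric space equipped with a Borel probability measure m and let f : X → X be continuous. Suppose that for every integer n ≥ 1 there is an open set V_n ⊆ X with m(V_n) > 1 − 1/n² and m(f(closure V_n)) < 1/n². Then f is totally singular with respect to m: there exists a Borel set Λ ⊆ X with m(Λ) = 1 and m(f⁻¹(Λ)) = 0. -/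
open MeasureTheory Filter Topology ENNReal

/-- If a continuous map `f` of a compact metric space with a Borel probability measure `m`
admits, for every `n ≥ 1`, an open set `V n` with `m (V n) > 1 - 1/n²` and
`m (f '' closure (V n)) < 1/n²`, then `f` is totally singular with respect to `m`: there is a
Borel set `Λ` of full measure whose preimage is a null set. -/
theorem totally_singular_of_crushed_open_sets
    {X : Type*} [MetricSpace X] [CompactSpace X] [MeasurableSpace X] [BorelSpace X]
    {f : X → X} (hf : Continuous f) (m : Measure X) (hm : IsProbabilityMeasure m)
    (V : ℕ → Set X) (hopen : ∀ n, 1 ≤ n → IsOpen (V n))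
    (hbig : ∀ n, 1 ≤ n → m (V n) > 1 - (((n : ℝ≥0∞)) ^ 2)⁻¹)
    (hsmall : ∀ n, 1 ≤ n → m (f '' closure (V n)) < (((n : ℝ≥0∞)) ^ 2)⁻¹) :
    ∃ Λ : Set X, MeasurableSet Λ ∧ m Λ = 1 ∧ m (f ⁻¹' Λ) = 0 := by
  set s : ℕ → Set X := fun n => f '' closure (V (n + 1)) with hsdef
  have hcpt : ∀ n, IsCompact (s n) := fun n =>
    (isClosed_closure.isCompact).image hf
  have hmeas : ∀ n, MeasurableSet (s n) := fun n => (hcpt n).isClosed.measurableSet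
  have hsmall' : ∀ n : ℕ, m (s n) < ((((n : ℝ≥0∞)) + 1) ^ 2)⁻¹ := by
    intro n
    have := hsmall (n + 1) (by omega)
    simpa [hsdef] using this
  set Λ : Set X := ⋃ N : ℕ, ⋂ n : ℕ, ⋂ _ : N ≤ n, (s n)ᶜ with hΛdef
  have hΛmeas : MeasurableSet Λ :=
    MeasurableSet.iUnion fun N => MeasurableSet.iInter fun n =>
      MeasurableSet.iInter fun _ => (hmeas n).compl
  refine ⟨Λ, hΛmeas, ?_, ?_⟩
  · -- `m Λ = 1`
    have hΛc : Λᶜ = ⋂ N : ℕ, ⋃ n : ℕ, ⋃ _ : N ≤ n, s n := by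
      simp [hΛdef, Set.compl_iUnion, Set.compl_iInter]
    -- summability of the bounds
    have hg : (∑' n : ℕ, ((((n : ℝ≥0∞)) + 1) ^ 2)⁻¹) ≠ ∞ := by
      have heq : ∀ n : ℕ, ((((n : ℝ≥0∞)) + 1) ^ 2)⁻¹ =
          ((((((n : NNReal)) + 1) ^ 2)⁻¹ : NNReal) : ℝ≥0∞) := by
        intro n
        rw [ENNReal.coe_inv (by positivity), ENNReal.coe_pow, ENNReal.coe_add,
          ENNReal.coe_one, ENNReal.coe_natCast]
      rw [tsum_congr heq, ENNReal.tsum_coe_ne_top_iff_summable, ← NNReal.summable_coe]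
      have h1 : Summable (fun n : ℕ => (((n : ℝ)) ^ 2)⁻¹) :=
        Real.summable_nat_pow_inv.mpr (by norm_num)
      refine ((summable_nat_add_iff 1).mpr h1).congr fun n => ?_
      push_cast
      norm_num
    have hsum : (∑' n : ℕ, m (s n)) ≠ ∞ :=
      ne_top_of_le_ne_top hg (ENNReal.tsum_le_tsum fun n => (hsmall' n).le)
    have htail := ENNReal.tendsto_sum_nat_add (fun n => m (s n)) hsum
    have hle : ∀ N : ℕ, m Λᶜ ≤ ∑' k : ℕ, m (s (k + N)) := by
      intro N
      rw [hΛc]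
      refine le_trans (measure_mono ?_) (measure_iUnion_le _)
      refine Set.iInter_subset_of_subset N ?_
      intro x hx
      simp only [Set.mem_iUnion] at hx ⊢
      obtain ⟨n, hn, hxn⟩ := hx
      exact ⟨n - N, by simpa [Nat.sub_add_cancel hn] using hxn⟩
    have hnull : m Λᶜ = 0 := by
      have := ge_of_tendsto' htail hle
      simpa using this
    rwa [prob_compl_eq_zero_iff hΛmeas] at hnull
  · -- `m (f ⁻¹' Λ) = 0`
    have hsub : f ⁻¹' Λ ⊆ ⋃ N : ℕ, ⋂ n : ℕ, ⋂ _ : N ≤ n, (V (n + 1))ᶜ := by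
      rw [hΛdef]
      rw [Set.preimage_iUnion]
      refine Set.iUnion_mono fun N => ?_
      simp only [Set.preimage_iInter]
      refine Set.iInter_mono fun n => Set.iInter_mono fun _ => ?_
      intro x hx
      simp only [Set.preimage_compl, Set.mem_compl_iff, Set.mem_preimage] at hx
      intro hxV
      exact hx ⟨x, subset_closure hxV, rfl⟩
    refine measure_mono_null hsub (measure_iUnion_null fun N => ?_)
    have hVc : ∀ k : ℕ, m ((V (k + 1))ᶜ) ≤ ((((k : ℝ≥0∞)) + 1) ^ 2)⁻¹ := by
      intro k
      have hb := hbig (k + 1) (by omega)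
      push_cast at hb
      have hb2 : (1 : ℝ≥0∞) ≤ ((((k : ℝ≥0∞)) + 1) ^ 2)⁻¹ + m (V (k + 1)) := by
        rw [← tsub_le_iff_left]
        exact hb.le
      have hmeasV : MeasurableSet (V (k + 1)) :=
        (hopen (k + 1) (by omega)).measurableSet
      rw [prob_compl_eq_one_sub hmeasV, tsub_le_iff_left]
      rwa [add_comm] at hb2
    -- the big intersection is contained in each `(V (N + j + 1))ᶜ`
    have hIle : ∀ j : ℕ, m (⋂ n : ℕ, ⋂ _ : N ≤ n, (V (n + 1))ᶜ) ≤ ((j : ℝ≥0∞))⁻¹ := by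
      intro j
      have h1 : m (⋂ n : ℕ, ⋂ _ : N ≤ n, (V (n + 1))ᶜ) ≤ m ((V (N + j + 1))ᶜ) := by
        refine measure_mono ?_
        refine Set.iInter_subset_of_subset (N + j) ?_
        exact Set.iInter_subset _ (by omega)
      refine h1.trans ((hVc (N + j)).trans ?_)
      refine ENNReal.inv_le_inv.mpr ?_
      have h2 : ((j : ℝ≥0∞)) ≤ (((N + j : ℕ)) : ℝ≥0∞) + 1 := by
        push_cast
        calc (j : ℝ≥0∞) ≤ (N : ℝ≥0∞) + j := le_add_self
          _ ≤ (N : ℝ≥0∞) + j + 1 := self_le_add_right _ _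
      exact h2.trans (le_self_pow₀ le_add_self (by norm_num))
    have := ge_of_tendsto' ENNReal.tendsto_inv_nat_nhds_zero hIle
    simpa using this
end

section
/- Let X be a compact metric space with a Borel probability measure m and f : X → X continuous. Let ν₁ and ν₂ be mutually singular f-invariant Borel probability measures on X. If the set A of points x ∈ X whose Birkhoff limit μ_x exists satisfies m(A) > 0, then the sequence m_n = (1/n)∑_{k=0}^{n−1} f_*^k m does not accumulate, in the weak* topology, on both ν₁ and ν₂. -/
/-!
By Fatou's lemma, for a continuous `φ ≥ 0` and any weak* cluster point `ν` of `(m_n)`, the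
`m`-integral of `liminf_n (1/n) ∑_{j<n} φ ∘ f^j` is at most `∫ φ dν`. Urysohn's lemma, applied to
open neighbourhoods of a `ν₁`-null set and of its `ν₂`-null complement, gives continuous
`φ, ψ ≥ 0` with `φ + ψ = 1` and `∫ φ dν₁`, `∫ ψ dν₂` as small as we like. At every point with a
Birkhoff limit the two liminfs add up to `1`, so `m(A)` is bounded by `∫ φ dν₁ + ∫ ψ dν₂`.
-/

open MeasureTheory Filter Topology ENNReal

noncomputable section

variable {X : Type*} [MetricSpace X] [CompactSpace X] [MeasurableSpace X] [BorelSpace X]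

/-- The averaged push-forwards `(1/n) ∑_{k<n} f_*^k m` of the measure `m` under `f`. -/
def pushAvg (f : X → X) (m : Measure X) (n : ℕ) : Measure X :=
  (n : ℝ≥0∞)⁻¹ • ∑ k ∈ Finset.range n, Measure.map f^[k] m

set_option linter.unusedSectionVars false in
lemma pushAvg_isProbabilityMeasure {f : X → X} (hf : Measurable f) (m : Measure X)
    (hm : IsProbabilityMeasure m) {n : ℕ} (hn : n ≠ 0) :
    IsProbabilityMeasure (pushAvg f m n) := by
  constructor
  have h1 : ∀ k, Measure.map f^[k] m Set.univ = 1 := fun k => by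
    haveI := hm
    rw [Measure.map_apply (hf.iterate k) MeasurableSet.univ, Set.preimage_univ, measure_univ]
  simp only [pushAvg, Measure.smul_apply, Measure.coe_finset_sum, Finset.sum_apply, h1,
    Finset.sum_const, Finset.card_range, nsmul_eq_mul, mul_one, smul_eq_mul]
  have hn' : (n : ℝ≥0∞) ≠ 0 := by exact_mod_cast hn
  exact ENNReal.inv_mul_cancel hn' (ENNReal.natCast_ne_top n)

/-- The sequence `m_n = (1/n) ∑_{k<n} f_*^k m`, `n ≥ 1`, of averaged push-forwards of a
probability measure `m`, as a sequence of probability measures. -/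
def pushProbAvg (f : X → X) (hf : Measurable f) (m : Measure X)
    (hm : IsProbabilityMeasure m) (n : ℕ) : ProbabilityMeasure X :=
  ⟨pushAvg f m (n + 1), pushAvg_isProbabilityMeasure hf m hm n.succ_ne_zero⟩

lemma Continuous.integrable_of_compactSpace {Y E : Type*} [TopologicalSpace Y] [CompactSpace Y]
    [MeasurableSpace Y] [OpensMeasurableSpace Y] [NormedAddCommGroup E] {μ : Measure Y}
    [IsFiniteMeasure μ] {g : Y → E} (hg : Continuous g) : Integrable g μ :=
  hg.integrable_of_hasCompactSupport (HasCompactSupport.of_compactSpace g)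

lemma MeasureTheory.Measure.MutuallySingular.exists_continuousMap_integral_lt {Y : Type*}
    [TopologicalSpace Y] [NormalSpace Y] [MeasurableSpace Y] {ν₁ ν₂ : Measure Y}
    [ν₁.OuterRegular] [ν₂.OuterRegular] (h : ν₁.MutuallySingular ν₂) {ε : ℝ≥0∞} (hε : 0 < ε) :
    ∃ φ ψ : C(Y, ℝ), (∀ y, 0 ≤ φ y) ∧ (∀ y, 0 ≤ ψ y) ∧ φ + ψ = 1 ∧
      ENNReal.ofReal (∫ y, φ y ∂ν₁) < ε ∧ ENNReal.ofReal (∫ y, ψ y ∂ν₂) < ε := by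
  obtain ⟨S, -, hν₁S, hν₂S⟩ := h
  obtain ⟨U, hSU, hU, hν₁U⟩ := Set.exists_isOpen_lt_of_lt S ε (hν₁S ▸ hε)
  obtain ⟨V, hSV, hV, hν₂V⟩ := Set.exists_isOpen_lt_of_lt Sᶜ ε (hν₂S ▸ hε)
  have hUV : Disjoint Vᶜ Uᶜ :=
    Set.disjoint_compl_left_iff_subset.2 ((Set.compl_subset_compl.2 hSU).trans hSV)
  obtain ⟨g, hg₀, hg₁, hg⟩ :=
    exists_continuous_zero_one_of_isClosed hV.isClosed_compl hU.isClosed_compl hUV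
  refine ⟨1 - g, g, fun y => sub_nonneg.2 (hg y).2, fun y => (hg y).1, sub_add_cancel 1 g,
    ?_, ?_⟩
  · refine (integral_le_measure (fun y _ => ?_) (fun y hy => ?_)).trans_lt hν₁U
    · simpa using (hg y).1
    · simp [hg₁ hy]
  · refine (integral_le_measure (fun y _ => (hg y).2) (fun y hy => ?_)).trans_lt hν₂V
    simp [hg₀ (show y ∈ Vᶜ from hy)]

lemma birkhoffAvg_nonneg {α : Type*} {f : α → α} {φ : α → ℝ} (hφ : ∀ x, 0 ≤ φ x) (x : α)
    (n : ℕ) : 0 ≤ birkhoffAvg f φ x n :=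
  mul_nonneg (by positivity) (Finset.sum_nonneg fun _ _ => hφ _)

lemma measurable_birkhoffAvg {α : Type*} [MeasurableSpace α] {f : α → α} {φ : α → ℝ}
    (hf : Measurable f) (hφ : Measurable φ) (n : ℕ) : Measurable (birkhoffAvg f φ · n) :=
  measurable_const.mul (Finset.measurable_sum _ fun j _ => hφ.comp (hf.iterate j))

lemma continuous_birkhoffAvg {Y : Type*} [TopologicalSpace Y] {f : Y → Y} {φ : Y → ℝ}
    (hf : Continuous f) (hφ : Continuous φ) (n : ℕ) : Continuous (birkhoffAvg f φ · n) :=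
  continuous_const.mul (continuous_finsetSum _ fun j _ => hφ.comp (hf.iterate j))

lemma integral_pushAvg {Y : Type*} [TopologicalSpace Y] [CompactSpace Y] [MeasurableSpace Y]
    [OpensMeasurableSpace Y] {f : Y → Y} (hf : Measurable f) (m : Measure Y) [IsFiniteMeasure m]
    {φ : Y → ℝ} (hφ : Continuous φ) (n : ℕ) :
    ∫ y, φ y ∂pushAvg f m n = ∫ x, birkhoffAvg f φ x n ∂m := by
  have hint : ∀ k, Integrable (fun x => φ (f^[k] x)) m := fun k =>
    hφ.integrable_of_compactSpace.comp_measurable (hf.iterate k)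
  rw [pushAvg, integral_smul_measure,
    integral_finsetSum_measure fun k _ => hφ.integrable_of_compactSpace]
  simp_rw [birkhoffAvg, integral_const_mul]
  rw [integral_finsetSum _ fun k _ => hint k]
  simp_rw [integral_map (hf.iterate _).aemeasurable hφ.aestronglyMeasurable_of_compactSpace]
  simp [ENNReal.toReal_inv]

/-- Taken in `ℝ≥0∞`, so that it always exists and Fatou's lemma applies. -/
def birkhoffLiminf {α : Type*} (f : α → α) (φ : α → ℝ) (x : α) : ℝ≥0∞ :=
  liminf (fun n => ENNReal.ofReal (birkhoffAvg f φ x n)) atTop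

lemma measurable_birkhoffLiminf {α : Type*} [MeasurableSpace α] {f : α → α} {φ : α → ℝ}
    (hf : Measurable f) (hφ : Measurable φ) : Measurable (birkhoffLiminf f φ) :=
  Measurable.liminf fun n => ENNReal.measurable_ofReal.comp (measurable_birkhoffAvg hf hφ n)

lemma lintegral_birkhoffLiminf_le_of_mapClusterPt {f : X → X} (hf : Continuous f)
    (m : Measure X) (hm : IsProbabilityMeasure m) {ν : ProbabilityMeasure X}
    (hν : MapClusterPt ν atTop (pushProbAvg f hf.measurable m hm)) {φ : C(X, ℝ)}
    (hφ : ∀ x, 0 ≤ φ x) :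
    ∫⁻ x, birkhoffLiminf f φ x ∂m ≤ ENNReal.ofReal (∫ x, φ x ∂ν) := by
  have hcont : Continuous fun μ : ProbabilityMeasure X => ENNReal.ofReal (∫ x, φ x ∂μ) :=
    ENNReal.continuous_ofReal.comp
      (ProbabilityMeasure.continuous_integral_boundedContinuousFunction
        (BoundedContinuousFunction.mkOfCompact φ))
  have hint : ∀ n, ∫⁻ x, ENNReal.ofReal (birkhoffAvg f φ x (n + 1)) ∂m
      = ENNReal.ofReal (∫ x, φ x ∂(pushProbAvg f hf.measurable m hm n)) := fun n => by
    rw [← ofReal_integral_eq_lintegral_ofReal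
      ((continuous_birkhoffAvg hf φ.continuous (n + 1)).integrable_of_compactSpace)
      (Eventually.of_forall (birkhoffAvg_nonneg hφ · _))]
    exact congrArg ENNReal.ofReal (integral_pushAvg hf.measurable m φ.continuous (n + 1)).symm
  calc ∫⁻ x, birkhoffLiminf f φ x ∂m
      = ∫⁻ x, liminf (fun n => ENNReal.ofReal (birkhoffAvg f φ x (n + 1))) atTop ∂m :=
        lintegral_congr fun x =>
          (liminf_nat_add (fun n => ENNReal.ofReal (birkhoffAvg f φ x n)) 1).symm
    _ ≤ liminf (fun n => ∫⁻ x, ENNReal.ofReal (birkhoffAvg f φ x (n + 1)) ∂m) atTop :=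
        lintegral_liminf_le fun n =>
          ENNReal.measurable_ofReal.comp (measurable_birkhoffAvg hf.measurable φ.measurable _)
    _ = liminf (fun n => ENNReal.ofReal (∫ x, φ x ∂(pushProbAvg f hf.measurable m hm n)))
          atTop := by simp_rw [hint]
    _ ≤ ENNReal.ofReal (∫ x, φ x ∂ν) := (hν.continuousAt_comp hcont.continuousAt).liminf_le

lemma IsBirkhoffLimit.birkhoffLiminf_eq {Y : Type*} [MetricSpace Y] [MeasurableSpace Y]
    {f : Y → Y} {x : Y} {μ : Measure Y}
    (h : IsBirkhoffLimit f x μ) (φ : C(Y, ℝ)) :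
    birkhoffLiminf f φ x = ENNReal.ofReal (∫ y, φ y ∂μ) :=
  ((ENNReal.continuous_ofReal.tendsto _).comp (h.2 φ)).liminf_eq

lemma IsBirkhoffLimit.birkhoffLiminf_add_eq_one {f : X → X} {x : X} {μ : Measure X}
    (h : IsBirkhoffLimit f x μ) {φ ψ : C(X, ℝ)} (hφ : ∀ y, 0 ≤ φ y) (hψ : ∀ y, 0 ≤ ψ y)
    (hφψ : φ + ψ = 1) : birkhoffLiminf f φ x + birkhoffLiminf f ψ x = 1 := by
  have : IsProbabilityMeasure μ := h.1
  rw [h.birkhoffLiminf_eq, h.birkhoffLiminf_eq,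
    ← ENNReal.ofReal_add (integral_nonneg hφ) (integral_nonneg hψ),
    ← integral_add φ.continuous.integrable_of_compactSpace ψ.continuous.integrable_of_compactSpace]
  simp [← ContinuousMap.add_apply, hφψ]

lemma measure_setOf_exists_isBirkhoffLimit_le {f : X → X} (hf : Continuous f) (m : Measure X)
    {φ ψ : C(X, ℝ)} (hφ : ∀ y, 0 ≤ φ y) (hψ : ∀ y, 0 ≤ ψ y) (hφψ : φ + ψ = 1) :
    m {x | ∃ μ : Measure X, IsBirkhoffLimit f x μ}
      ≤ ∫⁻ x, birkhoffLiminf f φ x ∂m + ∫⁻ x, birkhoffLiminf f ψ x ∂m := by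
  have hmeas := measurable_birkhoffLiminf hf.measurable φ.measurable
  rw [← lintegral_add_left hmeas]
  calc m {x | ∃ μ : Measure X, IsBirkhoffLimit f x μ}
      ≤ m {x | 1 ≤ birkhoffLiminf f φ x + birkhoffLiminf f ψ x} :=
        measure_mono fun x ⟨_, hμ⟩ => (hμ.birkhoffLiminf_add_eq_one hφ hψ hφψ).ge
    _ ≤ ∫⁻ x, birkhoffLiminf f φ x + birkhoffLiminf f ψ x ∂m := by
        simpa using mul_meas_ge_le_lintegral₀
          (hmeas.add (measurable_birkhoffLiminf hf.measurable ψ.measurable)).aemeasurable 1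

theorem not_clusterPt_both_of_mutuallySingular_general
    {f : X → X} (hf : Continuous f) (m : Measure X) (hm : IsProbabilityMeasure m)
    (ν₁ ν₂ : ProbabilityMeasure X)
    (hsing : (ν₁ : Measure X).MutuallySingular (ν₂ : Measure X))
    (hA : 0 < m {x | ∃ μ : Measure X, IsBirkhoffLimit f x μ}) :
    ¬ (MapClusterPt ν₁ atTop (pushProbAvg f hf.measurable m hm) ∧
        MapClusterPt ν₂ atTop (pushProbAvg f hf.measurable m hm)) := by
  rintro ⟨h₁, h₂⟩
  set c := m {x | ∃ μ : Measure X, IsBirkhoffLimit f x μ}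
  obtain ⟨φ, ψ, hφ, hψ, hφψ, hφν₁, hψν₂⟩ :=
    hsing.exists_continuousMap_integral_lt (ENNReal.half_pos hA.ne')
  have : c < c := calc
    c ≤ ∫⁻ x, birkhoffLiminf f φ x ∂m + ∫⁻ x, birkhoffLiminf f ψ x ∂m :=
        measure_setOf_exists_isBirkhoffLimit_le hf m hφ hψ hφψ
    _ ≤ ENNReal.ofReal (∫ x, φ x ∂ν₁) + ENNReal.ofReal (∫ x, ψ x ∂ν₂) :=
        add_le_add (lintegral_birkhoffLiminf_le_of_mapClusterPt hf m hm h₁ hφ)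
          (lintegral_birkhoffLiminf_le_of_mapClusterPt hf m hm h₂ hψ)
    _ < c / 2 + c / 2 := ENNReal.add_lt_add hφν₁ hψν₂
    _ = c := ENNReal.add_halves c
  exact this.false

/-- If `ν₁` and `ν₂` are mutually singular invariant Borel probability measures of a continuous
map `f` of a compact metric space, and the set of points with a well-defined Birkhoff limit has
positive `m`-measure, then the averaged push-forwards `m_n = (1/n) ∑_{k<n} f_*^k m` cannot
accumulate (weakly*) on both `ν₁` and `ν₂`. -/
theorem not_clusterPt_both_of_mutuallySingular
    {f : X → X} (hf : Continuous f) (m : Measure X) (hm : IsProbabilityMeasure m)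
    (ν₁ ν₂ : ProbabilityMeasure X)
    (hsing : (ν₁ : Measure X).MutuallySingular (ν₂ : Measure X))
    (hinv₁ : Measure.map f (ν₁ : Measure X) = ν₁)
    (hinv₂ : Measure.map f (ν₂ : Measure X) = ν₂)
    (hA : 0 < m {x | ∃ μ : Measure X, IsBirkhoffLimit f x μ}) :
    ¬ (MapClusterPt ν₁ atTop (pushProbAvg f hf.measurable m hm) ∧
        MapClusterPt ν₂ atTop (pushProbAvg f hf.measurable m hm)) :=
  not_clusterPt_both_of_mutuallySingular_general hf m hm ν₁ ν₂ hsing hA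

end
end

section
/- There is an open and dense subset O of Homeo₊(S¹) such that every f ∈ O has rational rotation number, and moreover the rotation number function f ↦ ρ(f) is locally constant on O. -/
open MeasureTheory Filter Topology ENNReal Function

noncomputable section

theorem Real.fact_zero_lt_one : Fact ((0 : ℝ) < 1) := ⟨one_pos⟩

attribute [local instance] Real.fact_zero_lt_one

/-- The circle `ℝ/ℤ`. -/
abbrev Circle1 := AddCircle (1 : ℝ)

/-- `F` is an increasing (degree-one) lift of the circle map `f`. -/
def IsOrientedLift (f : Circle1 → Circle1) (F : ℝ → ℝ) : Prop :=
  Continuous F ∧ StrictMono F ∧ (∀ x : ℝ, F (x + 1) = F x + 1) ∧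
    ∀ x : ℝ, f (↑x) = ↑(F x)

/-- The space `Homeo₊(S¹)` of orientation-preserving self-homeomorphisms of the circle, with
the uniform (`C⁰`) topology: self-homeomorphisms admitting an increasing lift. -/
abbrev HomeoPlus := {f : C(Circle1, Circle1) // IsHomeomorph ⇑f ∧ ∃ F, IsOrientedLift ⇑f F}

/-- `ρ` is the rotation number of `f`: for a lift `F` of `f`, the limit `lim Fⁿ(0)/n` exists
and equals `ρ` modulo 1.  (For an orientation-preserving circle homeomorphism this limit is
independent of the base point and of the choice of lift.) -/
def HasRotationNumber (f : Circle1 → Circle1) (ρ : Circle1) : Prop :=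
  ∃ (F : ℝ → ℝ) (L : ℝ), IsOrientedLift f F ∧
    Tendsto (fun n : ℕ => F^[n] 0 / n) atTop (𝓝 L) ∧ (↑L : Circle1) = ρ


/-!
Call `f` good if some lift `F` and some `p : ℤ`, `q : ℕ` make the displacement
`F^[q] x - x - p` change sign. Then `q τ(F) = p`; a sign change survives `C⁰`-small
perturbations once lifts of nearby maps are aligned, so good maps form an open set on which the
rotation number is locally the constant `p / q`.

For density, look at the shifts `s + F`, `|s| ≤ t`. Dirichlet's theorem makes `q τ(F)` close to
an integer `p`, and connectedness of `[-t, t]` yields a shift that is good or satisfies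
`(s + F)^[q] = id + p`. Such a periodic map is conjugate to the rotation by `p / q`, and
conjugating back the perturbed rotation `y ↦ p / q + y + c sin (2π q y)` gives a nearby good map.
-/

open CircleDeg1Lift

theorem exists_int_forall_abs_sub_lt {d : ℝ → ℝ} (hd : Continuous d) {ε : ℝ} (hε : ε ≤ 1 / 2)
    (h : ∀ x, ∃ k : ℤ, |d x - k| < ε) : ∃ k : ℤ, ∀ x, |d x - k| < ε := by
  have not_half : ∀ z (j : ℤ), d z ≠ j + 1 / 2 := by
    intro z j hz
    obtain ⟨i, hi⟩ := h z
    rw [hz, abs_lt] at hi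
    have hji : ((j - i : ℤ) : ℝ) < 0 ∧ -1 < ((j - i : ℤ) : ℝ) := by
      push_cast
      constructor <;> linarith
    have : j - i < 0 ∧ -1 < j - i := by exact_mod_cast hji
    omega
  obtain ⟨k, hk⟩ := h 0
  refine ⟨k, fun x => ?_⟩
  obtain ⟨m, hm⟩ := h x
  obtain rfl : m = k := by
    rw [abs_lt] at hk hm
    by_contra hne
    rcases lt_or_gt_of_ne hne with hlt | hlt
    · have hlt : (m : ℝ) + 1 ≤ k := by exact_mod_cast hlt
      obtain ⟨z, hz⟩ := intermediate_value_univ x 0 hd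
        (show (m : ℝ) + 1 / 2 ∈ Set.Icc (d x) (d 0) from ⟨by linarith, by linarith⟩)
      exact not_half z m hz
    · have hlt : (k : ℝ) + 1 ≤ m := by exact_mod_cast hlt
      obtain ⟨z, hz⟩ := intermediate_value_univ 0 x hd
        (show (k : ℝ) + 1 / 2 ∈ Set.Icc (d 0) (d x) from ⟨by linarith, by linarith⟩)
      exact not_half z k hz
  exact hm

theorem AddCircle.dist_coe_le {p : ℝ} (a b : ℝ) :
    dist (a : AddCircle p) (b : AddCircle p) ≤ |a - b| := by
  rw [dist_eq_norm, ← AddCircle.coe_sub]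
  exact QuotientAddGroup.norm_mk_le_norm

@[simp] theorem Circle1.coe_intCast (k : ℤ) : ((k : ℝ) : Circle1) = 0 :=
  (AddCircle.coe_eq_zero_iff 1).mpr ⟨k, by simp⟩

theorem Circle1.exists_int_sub_eq_of_coe_eq {a b : ℝ} (h : (a : Circle1) = b) :
    ∃ k : ℤ, b - a = k := by
  have h0 : ((b - a : ℝ) : Circle1) = 0 := by rw [AddCircle.coe_sub, h, sub_self]
  obtain ⟨k, hk⟩ := (AddCircle.coe_eq_zero_iff (1 : ℝ)).mp h0
  exact ⟨k, by simpa using hk.symm⟩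

namespace IsOrientedLift

variable {f g : Circle1 → Circle1} {F G : ℝ → ℝ}

def toCircleDeg1Lift (hF : IsOrientedLift f F) : CircleDeg1Lift :=
  ⟨⟨F, hF.2.1.monotone⟩, hF.2.2.1⟩

@[simp] theorem coe_toCircleDeg1Lift (hF : IsOrientedLift f F) : ⇑hF.toCircleDeg1Lift = F := rfl

theorem sub_int (hG : IsOrientedLift g G) (k : ℤ) : IsOrientedLift g (fun x => G x - k) :=
  ⟨hG.1.sub continuous_const, fun _ _ hab => sub_lt_sub_right (hG.2.1 hab) _,
    fun x => by simp only [hG.2.2.1]; ring, fun x => by simp [hG.2.2.2]⟩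

theorem exists_int_eq_add (hF : IsOrientedLift f F) (hG : IsOrientedLift f G) :
    ∃ k : ℤ, ∀ x, G x = F x + k := by
  have hint : ∀ x, ∃ k : ℤ, G x - F x = k := fun x =>
    Circle1.exists_int_sub_eq_of_coe_eq (by rw [← hF.2.2.2, ← hG.2.2.2])
  obtain ⟨k, hk⟩ := exists_int_forall_abs_sub_lt (hG.1.sub hF.1) le_rfl fun x =>
    (hint x).imp fun k hk => by simp [hk]
  refine ⟨k, fun x => ?_⟩
  obtain ⟨m, hm⟩ := hint x
  have hmk : |((m - k : ℤ) : ℝ)| < 1 := by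
    push_cast
    rw [← hm]
    exact (hk x).trans (by norm_num)
  obtain rfl : m = k := by
    have : |m - k| < 1 := by exact_mod_cast hmk
    rw [abs_lt] at this
    omega
  linarith

theorem exists_abs_sub_lt (hF : IsOrientedLift f F) (hG : IsOrientedLift g G) {ε : ℝ}
    (hε : ε ≤ 1 / 2) (hfg : ∀ z, dist (f z) (g z) < ε) :
    ∃ G' : ℝ → ℝ, IsOrientedLift g G' ∧ ∀ x, |G' x - F x| < ε := by
  have hnear : ∀ x, ∃ k : ℤ, |G x - F x - k| < ε := fun x => by
    have := hfg x
    rw [hF.2.2.2, hG.2.2.2, dist_comm, dist_eq_norm, ← AddCircle.coe_sub,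
      UnitAddCircle.norm_eq] at this
    exact ⟨_, this⟩
  obtain ⟨k, hk⟩ := exists_int_forall_abs_sub_lt (hG.1.sub hF.1) hε hnear
  exact ⟨_, hG.sub_int k, fun x => by simpa [sub_right_comm] using hk x⟩

theorem tendsto_iterate_div (hF : IsOrientedLift f F) :
    Tendsto (fun n : ℕ => F^[n] 0 / n) atTop (𝓝 hF.toCircleDeg1Lift.translationNumber) := by
  simpa only [CircleDeg1Lift.coe_pow, coe_toCircleDeg1Lift] using
    hF.toCircleDeg1Lift.tendsto_translation_number₀

theorem hasRotationNumber (hF : IsOrientedLift f F) :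
    HasRotationNumber f (hF.toCircleDeg1Lift.translationNumber : ℝ) :=
  ⟨F, _, hF, hF.tendsto_iterate_div, rfl⟩

end IsOrientedLift

theorem HasRotationNumber.eq_translationNumber {f : Circle1 → Circle1} {F : ℝ → ℝ}
    {ρ : Circle1} (h : HasRotationNumber f ρ) (hF : IsOrientedLift f F) :
    ρ = (hF.toCircleDeg1Lift.translationNumber : ℝ) := by
  obtain ⟨G, L, hG, hlim, rfl⟩ := h
  obtain ⟨k, hk⟩ := hF.exists_int_eq_add hG
  set T : CircleDeg1Lift := translate (Multiplicative.ofAdd (k : ℝ))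
  have hGF : hG.toCircleDeg1Lift = T * hF.toCircleDeg1Lift :=
    CircleDeg1Lift.ext fun x => by simp [T, CircleDeg1Lift.translate_apply, hk x, add_comm]
  have hcomm : Commute T hF.toCircleDeg1Lift :=
    (commute_iff_commute.mpr (hF.toCircleDeg1Lift.commute_int_add k)).symm
  rw [tendsto_nhds_unique hlim hG.tendsto_iterate_div, hGF,
    translationNumber_mul_of_commute hcomm, translationNumber_translate]
  simp

theorem exists_pos_forall_dist_iterate_lt {X : Type*} [PseudoMetricSpace X] {F : X → X}
    (hF : Continuous F) (n : ℕ) (x : X) {δ : ℝ} (hδ : 0 < δ) :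
    ∃ ε > 0, ∀ G : X → X, (∀ y, dist (G y) (F y) < ε) → dist (G^[n] x) (F^[n] x) < δ := by
  induction n generalizing δ with
  | zero => exact ⟨1, one_pos, fun G _ => by simpa using hδ⟩
  | succ n ih =>
    obtain ⟨η, hη, hFη⟩ := Metric.continuous_iff.mp hF (F^[n] x) (δ / 2) (half_pos hδ)
    obtain ⟨ε, hε, hGε⟩ := ih hη
    refine ⟨min ε (δ / 2), lt_min hε (half_pos hδ), fun G hG => ?_⟩
    rw [iterate_succ_apply', iterate_succ_apply']
    calc dist (G (G^[n] x)) (F (F^[n] x))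
        ≤ dist (G (G^[n] x)) (F (G^[n] x)) + dist (F (G^[n] x)) (F (F^[n] x)) :=
          dist_triangle _ _ _
      _ < δ / 2 + δ / 2 :=
          add_lt_add ((hG _).trans_le (min_le_right _ _))
            (hFη _ (hGε G fun y => (hG y).trans_le (min_le_left _ _)))
      _ = δ := add_halves δ

def DisplacementChangesSign (F : ℝ → ℝ) (p : ℤ) (q : ℕ) : Prop :=
  (∃ x, F^[q] x < x + p) ∧ ∃ x, x + p < F^[q] x

namespace DisplacementChangesSign

variable {p : ℤ} {q : ℕ}

theorem translationNumber_eq {F : CircleDeg1Lift} (h : DisplacementChangesSign F p q) :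
    F.translationNumber = p / q := by
  obtain ⟨⟨x, hx⟩, y, hy⟩ := h
  have hq : (q : ℝ) ≠ 0 := by
    rintro hq
    obtain rfl : q = 0 := by exact_mod_cast hq
    simp only [iterate_zero, id_eq] at hx hy
    linarith
  rw [← CircleDeg1Lift.coe_pow] at hx hy
  have := le_antisymm ((F ^ q).translationNumber_le_of_le_add_int hx.le)
    ((F ^ q).le_translationNumber_of_add_int_le hy.le)
  rw [translationNumber_pow] at this
  field_simp
  linarith

theorem hasRotationNumber_iff {f : Circle1 → Circle1} {F : ℝ → ℝ} (hF : IsOrientedLift f F)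
    (h : DisplacementChangesSign F p q) {ρ : Circle1} :
    HasRotationNumber f ρ ↔ ρ = ((p / q : ℝ) : Circle1) := by
  have hτ : hF.toCircleDeg1Lift.translationNumber = p / q := translationNumber_eq h
  refine ⟨fun hρ => by rw [hρ.eq_translationNumber hF, hτ], ?_⟩
  rintro rfl
  rw [← hτ]
  exact hF.hasRotationNumber

theorem exists_pos_forall_of_abs_sub_lt {F : ℝ → ℝ} (hF : Continuous F)
    (h : DisplacementChangesSign F p q) :
    ∃ ε > 0, ∀ G : ℝ → ℝ, (∀ x, |G x - F x| < ε) → DisplacementChangesSign G p q := by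
  obtain ⟨⟨x, hx⟩, y, hy⟩ := h
  obtain ⟨εx, hεx, hx'⟩ := exists_pos_forall_dist_iterate_lt hF q x (sub_pos.mpr hx)
  obtain ⟨εy, hεy, hy'⟩ := exists_pos_forall_dist_iterate_lt hF q y (sub_pos.mpr hy)
  refine ⟨min εx εy, lt_min hεx hεy, fun G hG => ⟨⟨x, ?_⟩, y, ?_⟩⟩
  · have := hx' G fun z => (hG z).trans_le (min_le_left _ _)
    rw [Real.dist_eq, abs_lt] at this
    linarith
  · have := hy' G fun z => (hG z).trans_le (min_le_right _ _)
    rw [Real.dist_eq, abs_lt] at this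
    linarith

theorem eventually_nhds {f : HomeoPlus} {F : ℝ → ℝ} (hF : IsOrientedLift f.1 F)
    (h : DisplacementChangesSign F p q) :
    ∀ᶠ g in 𝓝 f, ∃ G, IsOrientedLift g.1 G ∧ DisplacementChangesSign G p q := by
  obtain ⟨ε, hε, hpersist⟩ := h.exists_pos_forall_of_abs_sub_lt hF.1
  refine Metric.eventually_nhds_iff.mpr ⟨min ε (1 / 2), by positivity, fun g hg => ?_⟩
  have hfg : ∀ z, dist (f.1 z) (g.1 z) < min ε (1 / 2) := fun z =>
    (ContinuousMap.dist_apply_le_dist z).trans_lt (by rwa [dist_comm] at hg)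
  obtain ⟨G₀, hG₀⟩ := g.2.2
  obtain ⟨G, hG, hGF⟩ := hF.exists_abs_sub_lt hG₀ (min_le_right _ _) hfg
  exact ⟨G, hG, hpersist G fun x => (hGF x).trans_le (min_le_left _ _)⟩

end DisplacementChangesSign

def signChangeSet : Set HomeoPlus :=
  {f | ∃ (F : ℝ → ℝ) (p : ℤ) (q : ℕ), IsOrientedLift f.1 F ∧ DisplacementChangesSign F p q}

theorem isOpen_signChangeSet : IsOpen signChangeSet :=
  isOpen_iff_mem_nhds.mpr fun _ ⟨_, _, _, hF, h⟩ =>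
    (h.eventually_nhds hF).mono fun _ ⟨G, hG, hG'⟩ => ⟨G, _, _, hG, hG'⟩

theorem exists_rat_hasRotationNumber_of_mem_signChangeSet {f : HomeoPlus}
    (hf : f ∈ signChangeSet) : ∃ r : ℚ, HasRotationNumber f.1 ((r : ℝ) : Circle1) := by
  obtain ⟨F, p, q, hF, h⟩ := hf
  exact ⟨p / q, (h.hasRotationNumber_iff hF).mpr (by push_cast; rfl)⟩

theorem eventually_rotationNumber_eq_of_mem_signChangeSet {f : HomeoPlus}
    (hf : f ∈ signChangeSet) :
    ∀ᶠ g in 𝓝 f, ∀ ρf ρg : Circle1,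
      HasRotationNumber f.1 ρf → HasRotationNumber g.1 ρg → ρg = ρf := by
  obtain ⟨F, p, q, hF, h⟩ := hf
  filter_upwards [h.eventually_nhds hF] with g ⟨G, hG, hG'⟩ ρf ρg hρf hρg
  rw [(h.hasRotationNumber_iff hF).mp hρf, (hG'.hasRotationNumber_iff hG).mp hρg]

theorem Function.Periodic.uniformContinuous_of_continuous {α : Type*} [UniformSpace α]
    {g : ℝ → α} {c : ℝ} (hc : 0 < c) (hg : Periodic g c) (hcont : Continuous g) :
    UniformContinuous g := by
  have := Fact.mk hc
  have hlift : UniformContinuous (hg.lift : AddCircle c → α) :=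
    CompactSpace.uniformContinuous_of_continuous (continuous_coinduced_dom.mpr hcont)
  have hcoe : LipschitzWith 1 ((↑) : ℝ → AddCircle c) := .of_dist_le_mul fun a b => by
    simpa [Real.dist_eq] using AddCircle.dist_coe_le (p := c) a b
  exact hlift.comp hcoe.uniformContinuous

namespace CircleDeg1Lift

variable (F : CircleDeg1Lift)

theorem uniformContinuous_of_continuous (hF : Continuous F) : UniformContinuous F := by
  have hper : Periodic (fun x => F x - x) 1 := fun x => by simp only [map_add_one]; ring
  simpa using (hper.uniformContinuous_of_continuous one_pos (hF.sub continuous_id)).add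
    uniformContinuous_id

theorem periodic_coe_comp : Periodic (fun x => (F x : Circle1)) 1 := fun x => by
  simp only [map_add_one, AddCircle.coe_add_period]

def toCircleMap : Circle1 → Circle1 := F.periodic_coe_comp.lift

variable {F}

theorem continuous_toCircleMap (hF : Continuous F) : Continuous F.toCircleMap :=
  continuous_coinduced_dom.mpr (continuous_quotient_mk'.comp hF)

theorem bijective_toCircleMap (hF : Continuous F) (hFs : StrictMono F) :
    Bijective F.toCircleMap := by
  refine ⟨fun a b hab => ?_, fun z => ?_⟩
  · induction a using QuotientAddGroup.induction_on with | H x => ?_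
    induction b using QuotientAddGroup.induction_on with | H y => ?_
    obtain ⟨k, hk⟩ := Circle1.exists_int_sub_eq_of_coe_eq hab
    have : x + k = y := hFs.injective (by rw [map_add_int]; linarith)
    simp [← this]
  · induction z using QuotientAddGroup.induction_on with | H y => ?_
    obtain ⟨x, rfl⟩ := (continuous_iff_surjective F).mp hF y
    exact ⟨x, rfl⟩

theorem isOrientedLift_toCircleMap (hF : Continuous F) (hFs : StrictMono F) :
    IsOrientedLift F.toCircleMap F :=
  ⟨hF, hFs, F.map_add_one, fun _ => rfl⟩

end CircleDeg1Lift

def HomeoPlus.ofLift (F : CircleDeg1Lift) (hF : Continuous F) (hFs : StrictMono F) : HomeoPlus :=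
  ⟨⟨F.toCircleMap, CircleDeg1Lift.continuous_toCircleMap hF⟩,
    isHomeomorph_iff_continuous_bijective.mpr ⟨CircleDeg1Lift.continuous_toCircleMap hF,
      CircleDeg1Lift.bijective_toCircleMap hF hFs⟩,
    F, CircleDeg1Lift.isOrientedLift_toCircleMap hF hFs⟩

theorem HomeoPlus.dist_le_of_isOrientedLift {f g : HomeoPlus} {F G : ℝ → ℝ}
    (hF : IsOrientedLift f.1 F) (hG : IsOrientedLift g.1 G) {C : ℝ} (hC : 0 ≤ C)
    (h : ∀ x, |F x - G x| ≤ C) : dist f g ≤ C := by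
  rw [Subtype.dist_eq, ContinuousMap.dist_le hC]
  intro z
  induction z using QuotientAddGroup.induction_on with | H x => ?_
  rw [hF.2.2.2, hG.2.2.2]
  exact (AddCircle.dist_coe_le _ _).trans (h x)

theorem iterate_add_le_iterate {α : Type*} [AddCommMonoid α] [PartialOrder α]
    [IsOrderedAddMonoid α] {F G : α → α} (hF : Monotone F) {c : α} (hc : 0 ≤ c)
    (h : ∀ x, F x + c ≤ G x) {n : ℕ} (hn : n ≠ 0) (x : α) : F^[n] x + c ≤ G^[n] x := by
  obtain ⟨m, rfl⟩ := Nat.exists_eq_succ_of_ne_zero hn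
  have hFG : F^[m] x ≤ G^[m] x :=
    hF.iterate_le_of_le (fun y => (le_add_of_nonneg_right hc).trans (h y)) m x
  rw [iterate_succ_apply', iterate_succ_apply']
  exact (add_le_add (hF hFG) le_rfl).trans (h _)

namespace CircleDeg1Lift

def shiftBy (s : ℝ) (F : CircleDeg1Lift) : CircleDeg1Lift :=
  ↑(translate (Multiplicative.ofAdd s)) * F

@[simp] theorem shiftBy_apply (s : ℝ) (F : CircleDeg1Lift) (x : ℝ) : shiftBy s F x = s + F x :=
  rfl

variable {F : CircleDeg1Lift}

theorem continuous_iterate_shiftBy (hF : Continuous F) (n : ℕ) (x : ℝ) :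
    Continuous fun s => (shiftBy s F)^[n] x := by
  induction n with
  | zero => exact continuous_const
  | succ n ih =>
    simp only [iterate_succ_apply', shiftBy_apply]
    exact continuous_id.add (hF.comp ih)

/-- Dirichlet's theorem gives `q` and `p` with `|q τ(F) - p| < t`, so somewhere the `q`-th
iterate of `-t + F` moves points by less than `p`, and that of `t + F` by more than `p`. By
connectedness of `[-t, t]` some shift does both, or neither. -/
theorem exists_displacementChangesSign_or_iterate_eq (hF : Continuous F) {t : ℝ} (ht : 0 < t) :
    ∃ s ∈ Set.Icc (-t) t, ∃ (p : ℤ) (q : ℕ), q ≠ 0 ∧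
      (DisplacementChangesSign (shiftBy s F) p q ∨ ∀ x, (shiftBy s F)^[q] x = x + p) := by
  obtain ⟨n, hn⟩ := exists_nat_one_div_lt ht
  obtain ⟨q, hq, -, hdir⟩ := Real.exists_nat_abs_mul_sub_round_le F.translationNumber n.succ_pos
  set p := round (q * F.translationNumber)
  have hpq : |q * F.translationNumber - p| < t := hdir.trans_lt <|
    (one_div_le_one_div_of_le (by positivity) (by push_cast; linarith)).trans_lt hn
  rw [abs_lt] at hpq
  obtain ⟨x, hx⟩ := (F ^ q).exists_eq_add_translationNumber (F.continuous_pow hF q)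
  rw [translationNumber_pow, coe_pow] at hx
  set A := {s | ∃ x, (shiftBy s F)^[q] x < x + p}
  set B := {s | ∃ x, x + p < (shiftBy s F)^[q] x}
  have hA : IsOpen A := by
    simp only [A, Set.ofPred_exists]
    exact isOpen_iUnion fun x => isOpen_lt (continuous_iterate_shiftBy hF q x) continuous_const
  have hB : IsOpen B := by
    simp only [B, Set.ofPred_exists]
    exact isOpen_iUnion fun x => isOpen_lt continuous_const (continuous_iterate_shiftBy hF q x)
  have hAt : -t ∈ A := ⟨x, by
    have := iterate_add_le_iterate (G := F) (shiftBy (-t) F).monotone ht.le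
      (fun y => by simp) hq.ne' x
    linarith⟩
  have hBt : t ∈ B := ⟨x, by
    have := iterate_add_le_iterate (G := shiftBy t F) F.monotone ht.le
      (fun y => by simp [add_comm]) hq.ne' x
    linarith⟩
  by_cases hcover : Set.Icc (-t) t ⊆ A ∪ B
  · obtain ⟨s, hs, hsA, hsB⟩ := isPreconnected_Icc A B hA hB hcover
      ⟨-t, ⟨le_rfl, by linarith⟩, hAt⟩ ⟨t, ⟨by linarith, le_rfl⟩, hBt⟩
    exact ⟨s, hs, p, q, hq.ne', Or.inl ⟨hsA, hsB⟩⟩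
  · obtain ⟨s, hs, hsAB⟩ := Set.not_subset.mp hcover
    simp only [Set.mem_union, A, B, Set.mem_ofPred_eq, not_or, not_exists, not_lt] at hsAB
    exact ⟨s, hs, p, q, hq.ne', Or.inr fun y => le_antisymm (hsAB.2 y) (hsAB.1 y)⟩

theorem units_strictMono (e : CircleDeg1Liftˣ) : StrictMono (e : CircleDeg1Lift) := by
  simpa only [coe_toOrderIso] using (toOrderIso e).strictMono

theorem units_continuous (e : CircleDeg1Liftˣ) : Continuous (e : CircleDeg1Lift) := by
  simpa only [coe_toOrderIso] using (toOrderIso e).continuous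

/-- The conjugacy is the average `x ↦ (x + P x + ⋯ + P^[q-1] x) / q`. -/
theorem exists_units_eq_conj_translate {P : CircleDeg1Lift} (hPc : Continuous P)
    (hPs : StrictMono P) {p : ℤ} {q : ℕ} (hq : q ≠ 0) (hP : ∀ x, P^[q] x = x + p) :
    ∃ e : CircleDeg1Liftˣ, P = ↑e⁻¹ * ↑(translate (Multiplicative.ofAdd (p / q : ℝ))) * ↑e := by
  have hq' : (0 : ℝ) < q := by positivity
  set h : ℝ → ℝ := fun x => (∑ k ∈ Finset.range q, P^[k] x) / q
  have hs : StrictMono h := fun a b hab =>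
    div_lt_div_of_pos_right (Finset.sum_lt_sum_of_nonempty (Finset.nonempty_range_iff.mpr hq)
      fun k _ => (hPs.iterate k) hab) hq'
  have h1 : ∀ x, h (x + 1) = h x + 1 := fun x => by
    have : ∀ k, P^[k] (x + 1) = P^[k] x + 1 := fun k => by rw [← coe_pow, map_add_one]
    simp only [h, this, Finset.sum_add_distrib, Finset.sum_const, Finset.card_range,
      nsmul_eq_mul, mul_one]
    field_simp
  set H : CircleDeg1Lift := ⟨⟨h, hs.monotone⟩, h1⟩
  have hc : Continuous H := (continuous_finsetSum _ fun k _ => hPc.iterate k).div_const _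
  have hHP : ∀ x, H (P x) = p / q + H x := fun x => by
    have hsum := Finset.sum_range_succ' (fun k => P^[k] x) q
    rw [Finset.sum_range_succ, hP] at hsum
    simp only [iterate_succ_apply, iterate_zero_apply] at hsum
    change (∑ k ∈ Finset.range q, P^[k] (P x)) / q = p / q + (∑ k ∈ Finset.range q, P^[k] x) / q
    rw [← add_div]
    congr 1
    linarith
  set e := (isUnit_iff_bijective.mpr ⟨hs.injective, (continuous_iff_surjective H).mp hc⟩).unit
  have he : (e : CircleDeg1Lift) = H := IsUnit.unit_spec _
  refine ⟨e, CircleDeg1Lift.ext fun x => ?_⟩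
  rw [mul_apply, mul_apply, translate_apply, he, ← hHP, ← he, units_inv_apply_apply]

end CircleDeg1Lift

theorem strictMono_add_mul_sin {c ω : ℝ} (h : |c| * |ω| < 1) :
    StrictMono fun y => y + c * Real.sin (ω * y) := fun a b hab => by
  have hsin : |c * Real.sin (ω * b) - c * Real.sin (ω * a)| ≤ |c| * |ω| * (b - a) :=
    calc |c * Real.sin (ω * b) - c * Real.sin (ω * a)|
        = |c| * |Real.sin (ω * b) - Real.sin (ω * a)| := by rw [← mul_sub, abs_mul]
      _ ≤ |c| * |ω * b - ω * a| :=
          mul_le_mul_of_nonneg_left (Real.abs_sin_sub_sin_le _ _) (abs_nonneg c)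
      _ = |c| * |ω| * (b - a) := by
        rw [← mul_sub, abs_mul, abs_of_pos (sub_pos.mpr hab), mul_assoc]
  have := (abs_le.mp hsin).1
  nlinarith

namespace CircleDeg1Lift

open Real in
theorem exists_near_id_commute_translate {q : ℕ} (hq : q ≠ 0) {δ : ℝ} (hδ : 0 < δ) :
    ∃ κ : CircleDeg1Lift, Continuous κ ∧ StrictMono κ ∧ (∀ y, |κ y - y| < δ) ∧
      (∀ j : ℤ, Commute (↑(translate (Multiplicative.ofAdd (j / q : ℝ))) : CircleDeg1Lift) κ) ∧
      (∃ y, y < κ y) ∧ ∃ y, κ y < y := by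
  have hq' : (0 : ℝ) < q := by positivity
  set ω := 2 * π * q with hω_def
  have hω : 0 < ω := by positivity
  set c := min (δ / 2) (1 / (2 * ω))
  have hc : 0 < c := lt_min (half_pos hδ) (by positivity)
  have hcω : |c| * |ω| < 1 := by
    rw [abs_of_pos hc, abs_of_pos hω]
    calc c * ω ≤ 1 / (2 * ω) * ω := by gcongr; exact min_le_right _ _
      _ < 1 := by field_simp; norm_num
  have hshift : ∀ (j : ℤ) y, sin (ω * (j / q + y)) = sin (ω * y) := fun j y => by
    rw [← sin_add_int_mul_two_pi (ω * y) j, hω_def]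
    field_simp
    ring_nf
  set κ : CircleDeg1Lift :=
    ⟨⟨fun y => y + c * sin (ω * y), (strictMono_add_mul_sin hcω).monotone⟩, fun y => by
      have := hshift q y
      rw [Int.cast_natCast, div_self hq'.ne', add_comm] at this
      simp only [this]
      ring⟩
  have hκ : ∀ y, κ y = y + c * sin (ω * y) := fun _ => rfl
  have hquarter : ω * (1 / (4 * q)) = π / 2 := by rw [hω_def]; field_simp; ring
  refine ⟨κ, (by change Continuous fun y => y + c * sin (ω * y); fun_prop),
    strictMono_add_mul_sin hcω, fun y => ?_, fun j => ?_, ⟨1 / (4 * q), ?_⟩,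
    ⟨-(1 / (4 * q)), ?_⟩⟩
  · rw [hκ, add_sub_cancel_left, abs_mul, abs_of_pos hc]
    calc c * |sin (ω * y)| ≤ c * 1 := by gcongr; exact abs_sin_le_one _
      _ < δ := by rw [mul_one]; exact (min_le_left _ _).trans_lt (half_lt_self hδ)
  · refine commute_iff_commute.mpr fun y => ?_
    simp only [translate_apply, hκ, hshift]
    ring
  · rw [hκ, hquarter, sin_pi_div_two]
    linarith
  · rw [hκ, mul_neg, hquarter, sin_neg, sin_pi_div_two]
    linarith

end CircleDeg1Lift

theorem DisplacementChangesSign.units_conj {p : ℤ} {q : ℕ} (e : CircleDeg1Liftˣ)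
    {K : CircleDeg1Lift} (h : DisplacementChangesSign K p q) :
    DisplacementChangesSign (↑e⁻¹ * K * ↑e : CircleDeg1Lift) p q := by
  have hiter : ∀ y, (⇑(↑e⁻¹ * K * ↑e : CircleDeg1Lift))^[q] ((↑e⁻¹ : CircleDeg1Lift) y) =
      (↑e⁻¹ : CircleDeg1Lift) (K^[q] y) := fun y => by
    rw [← CircleDeg1Lift.coe_pow, Units.conj_pow', mul_apply, mul_apply, units_apply_inv_apply,
      CircleDeg1Lift.coe_pow]
  have hmono := units_strictMono e⁻¹
  obtain ⟨⟨x, hx⟩, y, hy⟩ := h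
  refine ⟨⟨(↑e⁻¹ : CircleDeg1Lift) x, ?_⟩, (↑e⁻¹ : CircleDeg1Lift) y, ?_⟩
  · rw [hiter, ← map_add_int]
    exact hmono hx
  · rw [hiter, ← map_add_int]
    exact hmono hy

namespace CircleDeg1Lift

theorem displacementChangesSign_translate_mul {κ : CircleDeg1Lift} (hκ : StrictMono κ) {p : ℤ}
    {q : ℕ} (hq : q ≠ 0)
    (hcomm : Commute (↑(translate (Multiplicative.ofAdd (p / q : ℝ))) : CircleDeg1Lift) κ)
    (hup : ∃ y, y < κ y) (hdown : ∃ y, κ y < y) :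
    DisplacementChangesSign ⇑(↑(translate (Multiplicative.ofAdd (p / q : ℝ))) * κ) p q := by
  have hiter : ∀ y, (⇑(↑(translate (Multiplicative.ofAdd (p / q : ℝ))) * κ))^[q] y
      = p + κ^[q] y := fun y => by
    rw [← coe_pow, hcomm.mul_pow, ← Units.val_pow_eq_pow_val, translate_pow, mul_apply,
      translate_apply, coe_pow, mul_div_cancel₀ _ (by exact_mod_cast hq)]
  obtain ⟨y, hy⟩ := hup
  obtain ⟨z, hz⟩ := hdown
  have hup := hκ.strictMono_iterate_of_lt_map hy (Nat.pos_of_ne_zero hq)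
  have hdown := hκ.strictAnti_iterate_of_map_lt hz (Nat.pos_of_ne_zero hq)
  simp only [iterate_zero, id_eq] at hup hdown
  exact ⟨⟨z, by rw [hiter]; linarith⟩, y, by rw [hiter]; linarith⟩

theorem exists_displacementChangesSign_near_of_iterate_eq {P : CircleDeg1Lift}
    (hPc : Continuous P) (hPs : StrictMono P) {p : ℤ} {q : ℕ} (hq : q ≠ 0)
    (hP : ∀ x, P^[q] x = x + p) {ε : ℝ} (hε : 0 < ε) :
    ∃ G : CircleDeg1Lift, Continuous G ∧ StrictMono G ∧ DisplacementChangesSign G p q ∧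
      ∀ x, |G x - P x| < ε := by
  obtain ⟨e, rfl⟩ := exists_units_eq_conj_translate hPc hPs hq hP
  obtain ⟨η, hη, hηε⟩ := Metric.uniformContinuous_iff.mp
    ((e⁻¹ : CircleDeg1Liftˣ).1.uniformContinuous_of_continuous (units_continuous e⁻¹)) ε hε
  obtain ⟨κ, hκc, hκs, hκη, hκT, hup, hdown⟩ := exists_near_id_commute_translate hq hη
  set T : CircleDeg1Lift := ↑(translate (Multiplicative.ofAdd (p / q : ℝ)))
  refine ⟨↑e⁻¹ * (T * κ) * ↑e, ?_, ?_,
    (displacementChangesSign_translate_mul hκs hq (hκT p) hup hdown).units_conj e, fun x => ?_⟩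
  · simp only [coe_mul]
    exact (units_continuous e⁻¹).comp (((units_continuous _).comp hκc).comp (units_continuous e))
  · simp only [coe_mul]
    exact (units_strictMono e⁻¹).comp (((units_strictMono _).comp hκs).comp (units_strictMono e))
  · change dist ((↑e⁻¹ : CircleDeg1Lift) (T (κ (e x)))) ((↑e⁻¹ : CircleDeg1Lift) (T (e x))) < ε
    refine hηε ?_
    rw [Real.dist_eq]
    simp only [T, translate_apply, add_sub_add_left_eq_sub]
    exact hκη _

end CircleDeg1Lift

theorem dense_signChangeSet : Dense signChangeSet := by
  refine Metric.dense_iff.mpr fun f r hr => ?_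
  obtain ⟨F₀, hF⟩ := f.2.2
  set F := hF.toCircleDeg1Lift
  obtain ⟨s, hs, p, q, hq, hcases⟩ :=
    F.exists_displacementChangesSign_or_iterate_eq hF.1 (by positivity : 0 < r / 3)
  have hsF : ∀ x, |F.shiftBy s x - F x| ≤ r / 3 := fun x => by simpa using abs_le.mpr hs
  have hsc : Continuous (F.shiftBy s) := continuous_const.add hF.1
  have hss : StrictMono (F.shiftBy s) := fun a b hab => add_lt_add_right (hF.2.1 hab) s
  suffices ∃ G : CircleDeg1Lift, Continuous G ∧ StrictMono G ∧ DisplacementChangesSign G p q ∧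
      ∀ x, |G x - F x| ≤ 2 * r / 3 by
    obtain ⟨G, hGc, hGs, hG, hGF⟩ := this
    have hG' := CircleDeg1Lift.isOrientedLift_toCircleMap hGc hGs
    refine ⟨HomeoPlus.ofLift G hGc hGs, ?_, G, p, q, hG', hG⟩
    exact (HomeoPlus.dist_le_of_isOrientedLift hG' hF (by positivity) hGF).trans_lt
      (by linarith)
  rcases hcases with hcross | hperiodic
  · exact ⟨_, hsc, hss, hcross, fun x => (hsF x).trans (by linarith)⟩
  · obtain ⟨G, hGc, hGs, hG, hGP⟩ :=
      CircleDeg1Lift.exists_displacementChangesSign_near_of_iterate_eq hsc hss hq hperiodic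
        (by positivity : 0 < r / 3)
    refine ⟨G, hGc, hGs, hG, fun x => ?_⟩
    calc |G x - F x| ≤ |G x - F.shiftBy s x| + |F.shiftBy s x - F x| := abs_sub_le _ _ _
      _ ≤ r / 3 + r / 3 := add_le_add (hGP x).le (hsF x)
      _ = 2 * r / 3 := by ring

/-- There is an open and dense subset `O` of `Homeo₊(S¹)` such that every `f ∈ O` has a
rational rotation number, and the rotation number is locally constant on `O`. -/
theorem exists_open_dense_rational_rotation_number :
    ∃ O : Set HomeoPlus, IsOpen O ∧ Dense O ∧
      (∀ f ∈ O, ∃ q : ℚ, HasRotationNumber (⇑f.1) ((q : ℝ) : Circle1)) ∧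
      (∀ f ∈ O, ∃ U : Set HomeoPlus, IsOpen U ∧ f ∈ U ∧
        ∀ g ∈ U ∩ O, ∀ ρf ρg : Circle1,
          HasRotationNumber (⇑f.1) ρf → HasRotationNumber (⇑g.1) ρg → ρg = ρf) := by
  refine ⟨signChangeSet, isOpen_signChangeSet, dense_signChangeSet,
    fun f hf => exists_rat_hasRotationNumber_of_mem_signChangeSet hf, fun f hf => ?_⟩
  obtain ⟨U, hU, hUo, hfU⟩ :=
    eventually_nhds_iff.mp (eventually_rotationNumber_eq_of_mem_signChangeSet hf)
  exact ⟨U, hUo, hfU, fun g hg => hU g hg.1⟩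

end
end

section
/- Let f, g : S¹ → S¹ be continuous maps with deg(f) ≠ deg(g). Then there exists x₀ ∈ S¹ with dist(f(x₀), g(x₀)) = 1/2; in particular sup_{x ∈ S¹} dist(f(x), g(x)) = 1/2, so continuous circle maps of distinct degrees are at C⁰ distance exactly 1/2 from each other. -/
open MeasureTheory Filter Topology ENNReal Function

noncomputable section

attribute [local instance] ZeroLEOneClass.factZeroLtOne

/-!
The difference `H = F - G` of the lifts is continuous and satisfies `H (x + 1) = H x + (a - b)`,
so on `[0, 1]` it moves by the nonzero integer `a - b` and, by the intermediate value theorem,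
takes a value in `ℤ + 1/2`. At such a point `f x` and `g x` are antipodal, and no two points of
the circle are farther apart.
-/

theorem AddCircle.dist_le_half_period {p : ℝ} (hp : p ≠ 0) (x y : AddCircle p) :
    dist x y ≤ |p| / 2 :=
  dist_eq_norm x y ▸ AddCircle.norm_le_half_period p hp

theorem AddCircle.dist_coe_eq_half_period {p u v : ℝ} (k : ℤ) (h : u - v = k * p + p / 2) :
    dist (u : AddCircle p) v = |p| / 2 := by
  have hsub : (u : AddCircle p) - v = ↑(p / 2) := by
    rw [← AddCircle.coe_sub, h, AddCircle.coe_add, ← zsmul_eq_mul, AddCircle.coe_zsmul,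
      AddCircle.coe_period, smul_zero, zero_add]
  rw [dist_eq_norm, hsub, AddCircle.norm_half_period_eq]

theorem exists_int_add_half_mem_uIcc {u v : ℝ} (h : 1 ≤ |v - u|) :
    ∃ k : ℤ, (k + 1 / 2 : ℝ) ∈ Set.uIcc u v := by
  refine ⟨⌈min u v - 1 / 2⌉, ?_, ?_⟩
  · linarith [Int.le_ceil (min u v - 1 / 2)]
  · linarith [Int.ceil_lt_add_one (min u v - 1 / 2), max_sub_min_eq_abs u v]

theorem Continuous.exists_eq_int_add_half {H : ℝ → ℝ} (hH : Continuous H) {s t : ℝ}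
    (h : 1 ≤ |H t - H s|) : ∃ x : ℝ, ∃ k : ℤ, H x = k + 1 / 2 := by
  obtain ⟨k, hk⟩ := exists_int_add_half_mem_uIcc h
  obtain ⟨x, -, hx⟩ := intermediate_value_uIcc hH.continuousOn hk
  exact ⟨x, k, hx⟩

/-- Two continuous circle maps of different degrees are at `C⁰` distance exactly `1/2`:
if `F`, `G` are continuous lifts of `f`, `g` with `F(x+1) = F(x) + a`, `G(x+1) = G(x) + b`
and `a ≠ b` (so `deg f = a ≠ b = deg g`), then `dist (f x₀) (g x₀) = 1/2` for some `x₀`, and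
`⨆ x, dist (f x) (g x) = 1/2`. -/
theorem dist_eq_half_of_degree_ne
    (f g : C(Circle1, Circle1)) (F G : ℝ → ℝ) (hF : Continuous F) (hG : Continuous G)
    (hFf : ∀ x : ℝ, f (↑x) = ↑(F x)) (hGg : ∀ x : ℝ, g (↑x) = ↑(G x))
    (a b : ℤ) (ha : ∀ x : ℝ, F (x + 1) = F x + a) (hb : ∀ x : ℝ, G (x + 1) = G x + b)
    (hab : a ≠ b) :
    (∃ x₀ : Circle1, dist (f x₀) (g x₀) = 1 / 2) ∧
      (⨆ x : Circle1, dist (f x) (g x)) = 1 / 2 := by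
  have hshift : (F 1 - G 1) - (F 0 - G 0) = ((a - b : ℤ) : ℝ) := by
    have h1 := ha 0
    have h2 := hb 0
    rw [zero_add] at h1 h2
    push_cast
    linarith
  have hjump : 1 ≤ |(F 1 - G 1) - (F 0 - G 0)| := by
    rw [hshift, ← Int.cast_abs]
    exact_mod_cast Int.one_le_abs (sub_ne_zero.mpr hab)
  obtain ⟨x, k, hx⟩ := (hF.sub hG).exists_eq_int_add_half hjump
  have hantipodal : dist (f x) (g x) = 1 / 2 := by
    rw [hFf, hGg, AddCircle.dist_coe_eq_half_period k (by simpa using hx), abs_one]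
  have hle (z : Circle1) : dist (f z) (g z) ≤ 1 / 2 := by
    simpa using AddCircle.dist_le_half_period one_ne_zero (f z) (g z)
  refine ⟨⟨x, hantipodal⟩, le_antisymm (ciSup_le hle) ?_⟩
  exact le_ciSup_of_le ⟨1 / 2, Set.forall_mem_range.mpr hle⟩ (x : Circle1) hantipodal.ge

end
end

section
/- Fix an integer ℓ with |ℓ| ≥ 2 and let E_ℓ : S¹ → S¹ be x ↦ ℓx (mod 1). For h₁, h₂ ∈ Homeo₊(S¹) one has h₁⁻¹ ∘ E_ℓ ∘ h₁ = h₂⁻¹ ∘ E_ℓ ∘ h₂ if and only if h₂ = R_{j/(ℓ−1)} ∘ h₁ for some integer j, where R_t denotes the rotation x ↦ x + t of S¹. Consequently, for every f ∈ CE_ℓ(S¹) there are exactly |ℓ − 1| homeomorphisms h ∈ Homeo₊(S¹) with h⁻¹ ∘ E_ℓ ∘ h = f. -/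
open MeasureTheory Filter Topology ENNReal Function

noncomputable section

attribute [local instance] ZeroLEOneClass.factZeroLtOne

/-- The linear expanding circle map `E_ℓ : x ↦ ℓ·x (mod 1)`. -/
def expandingMap (ℓ : ℤ) : C(Circle1, Circle1) :=
  ⟨fun x => ℓ • x, continuous_zsmul ℓ⟩

/-- `CE_ℓ(S¹)`: continuous circle maps conjugated to `E_ℓ` by an orientation-preserving
homeomorphism. -/
def CEl (ℓ : ℤ) : Set C(Circle1, Circle1) :=
  {f | ∃ h : Circle1 ≃ₜ Circle1, (∃ F, IsOrientedLift (⇑h) F) ∧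
    ∀ x, f x = h.symm (expandingMap ℓ (h x))}

/-!
If `h₁⁻¹ ∘ E_ℓ ∘ h₁ = h₂⁻¹ ∘ E_ℓ ∘ h₂`, then `g = h₂ ∘ h₁⁻¹` commutes with `E_ℓ`, so a degree-one
lift `G` of `g` satisfies `G (ℓ x) - ℓ G x ∈ ℤ`; by continuity this integer is a constant `m`.
Then `χ = G - id + m / (ℓ - 1)` is periodic, hence bounded, and `χ (ℓ x) = ℓ χ x`; as `|ℓ| > 1`
this forces `χ = 0`, i.e. `g` is a rotation by an `(ℓ - 1)`-torsion point of the circle.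
Conversely these rotations commute with `E_ℓ`, and the `|ℓ - 1|` torsion points act freely and
transitively on the homeomorphisms conjugating `E_ℓ` to a given `f`.
-/

open Set Bornology

theorem eq_zero_of_comp_eq_smul_of_isBounded {X 𝕜 F : Type*} [NormedField 𝕜]
    [NormedAddCommGroup F] [NormedSpace 𝕜 F] {c : 𝕜} (hc : 1 < ‖c‖) {T : X → X} {χ : X → F}
    (hχ : ∀ x, χ (T x) = c • χ x) (hbdd : IsBounded (range χ)) (x : X) : χ x = 0 := by
  obtain ⟨C, hC⟩ := isBounded_iff_forall_norm_le.mp hbdd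
  have hiter (n : ℕ) : χ (T^[n] x) = c ^ n • χ x := by
    induction n with
    | zero => simp
    | succ n ih => rw [iterate_succ_apply', hχ, ih, pow_succ', mul_smul]
  by_contra hx
  obtain ⟨n, hn⟩ := pow_unbounded_of_one_lt (C / ‖χ x‖) hc
  have hle : ‖c‖ ^ n * ‖χ x‖ ≤ C := by
    rw [← norm_pow, ← norm_smul, ← hiter]
    exact hC _ (mem_range_self _)
  rw [div_lt_iff₀ (norm_pos_iff.mpr hx)] at hn
  linarith

theorem exists_int_eq_add_div_of_map_mul_sub_mem_range {ℓ : ℝ} (hℓ : 1 < |ℓ|) {G : ℝ → ℝ}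
    (hGc : Continuous G) (hG1 : ∀ x, G (x + 1) = G x + 1)
    (hG : ∀ x, G (ℓ * x) - ℓ * G x ∈ range ((↑) : ℤ → ℝ)) :
    ∃ j : ℤ, ∀ x, G x = x + j / (ℓ - 1) := by
  have hℓ1 : ℓ - 1 ≠ 0 := sub_ne_zero.mpr (by rintro rfl; simp at hℓ)
  obtain ⟨m, hm⟩ := hG 0
  have hconst (x : ℝ) : G (ℓ * x) = ℓ * G x + m := by
    have := isPreconnected_univ.constant_of_mapsTo
      Int.isClosedEmbedding_coe_real.isEmbedding.isDiscrete_range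
      (by fun_prop : Continuous fun x => G (ℓ * x) - ℓ * G x).continuousOn
      (fun x _ => hG x) (mem_univ x) (mem_univ 0)
    linarith
  set χ : ℝ → ℝ := fun x => G x - x + m / (ℓ - 1)
  have hχ (x : ℝ) : χ (ℓ * x) = ℓ • χ x := by
    simp only [χ, hconst, smul_eq_mul]
    field_simp
    ring
  have hχ_periodic : Function.Periodic χ 1 := fun x => by simp only [χ, hG1]; ring
  have hχ_zero := eq_zero_of_comp_eq_smul_of_isBounded hℓ hχ
    (hχ_periodic.isBounded_of_continuous one_ne_zero (by fun_prop))
  refine ⟨-m, fun x => ?_⟩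
  have := hχ_zero x
  simp only [χ] at this
  push_cast
  rw [neg_div]
  linarith

theorem Int.sub_one_ne_zero_of_two_le_abs {ℓ : ℤ} (hℓ : 2 ≤ |ℓ|) : ℓ - 1 ≠ 0 :=
  sub_ne_zero.mpr (by rintro rfl; norm_num at hℓ)

namespace Circle1

theorem exists_coe_int_div_eq_iff {m : ℤ} (hm : m ≠ 0) {c : Circle1} :
    (∃ j : ℤ, ((j / m : ℝ) : Circle1) = c) ↔ m • c = 0 := by
  have hm' : (m : ℝ) ≠ 0 := Int.cast_ne_zero.mpr hm
  constructor
  · rintro ⟨j, rfl⟩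
    rw [← AddCircle.coe_zsmul, zsmul_eq_mul, mul_div_cancel₀ _ hm', AddCircle.coe_eq_zero_iff]
    exact ⟨j, zsmul_one _⟩
  · obtain ⟨x, rfl⟩ := QuotientAddGroup.mk_surjective c
    intro h
    obtain ⟨j, hj⟩ := (AddCircle.coe_eq_zero_iff 1).mp ((AddCircle.coe_zsmul 1).trans h)
    rw [zsmul_one, zsmul_eq_mul] at hj
    refine ⟨j, congrArg _ ?_⟩
    rw [hj, mul_div_cancel_left₀ _ hm']

theorem ncard_zsmul_eq_zero {m : ℤ} (hm : m ≠ 0) :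
    {c : Circle1 | m • c = 0}.ncard = m.natAbs := by
  have : NeZero m.natAbs := ⟨Int.natAbs_ne_zero.mpr hm⟩
  have hrange :
      {c : Circle1 | m • c = 0} = range (ZMod.toAddCircle : ZMod m.natAbs → Circle1) := by
    ext c
    rw [Set.mem_ofPred_eq, ← natAbs_nsmul_eq_zero,
      AddCircle.nsmul_eq_zero_iff (Int.natAbs_pos.mpr hm)]
    constructor
    · rintro ⟨k, -, rfl⟩
      exact ⟨k, by rw [ZMod.toAddCircle_natCast, mul_one]⟩
    · rintro ⟨a, rfl⟩
      exact ⟨a.val, ZMod.val_lt a, by rw [mul_one, ZMod.toAddCircle_apply]⟩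
  rw [hrange, ncard_range_of_injective (ZMod.toAddCircle_injective _), Nat.card_zmod]

end Circle1

namespace IsOrientedLift

variable {f g : Circle1 → Circle1} {F G : ℝ → ℝ}

theorem comp (hf : IsOrientedLift f F) (hg : IsOrientedLift g G) :
    IsOrientedLift (f ∘ g) (F ∘ G) :=
  ⟨hf.1.comp hg.1, hf.2.1.comp hg.2.1, fun x => by simp [hg.2.2.1, hf.2.2.1],
    fun x => by simp [hg.2.2.2, hf.2.2.2]⟩

theorem const_add (hf : IsOrientedLift f F) (t : ℝ) :
    IsOrientedLift (fun y => (t : Circle1) + f y) (fun x => t + F x) :=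
  ⟨continuous_const.add hf.1, fun _ _ hab => (add_lt_add_iff_left t).mpr (hf.2.1 hab),
    fun x => by simp only [hf.2.2.1, add_assoc],
    fun x => by simp only [hf.2.2.2, AddCircle.coe_add]⟩

theorem surjective (hf : IsOrientedLift f F) : Surjective F :=
  (CircleDeg1Lift.continuous_iff_surjective ⟨⟨F, hf.2.1.monotone⟩, hf.2.2.1⟩).mp hf.1

theorem exists_symm {h : Circle1 ≃ₜ Circle1} (hF : IsOrientedLift h F) :
    ∃ G, IsOrientedLift h.symm G := by
  have hsurj := hF.surjective
  obtain ⟨-, hmono, hone, hlift⟩ := hF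
  let e := hmono.orderIsoOfSurjective F hsurj
  refine ⟨e.symm, e.symm.continuous, e.symm.strictMono, fun x => e.injective ?_, fun x => ?_⟩
  · rw [e.apply_symm_apply]
    change x + 1 = F (e.symm x + 1)
    rw [hone]
    exact congrArg (· + 1) (e.apply_symm_apply x).symm
  · rw [h.symm_apply_eq, hlift]
    exact congrArg _ (e.apply_symm_apply x).symm

theorem exists_rotation_of_commute {ℓ : ℤ} (hℓ : 2 ≤ |ℓ|) (hg : IsOrientedLift g G)
    (hcomm : Function.Commute g (ℓ • ·)) :
    ∃ c : Circle1, (ℓ - 1) • c = 0 ∧ ∀ y, g y = c + y := by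
  obtain ⟨hcont, -, hone, hlift⟩ := hg
  have hℓ' : 1 < |(ℓ : ℝ)| := by rw [← Int.cast_abs]; exact_mod_cast hℓ
  have hG (x : ℝ) : G (ℓ * x) - ℓ * G x ∈ range ((↑) : ℤ → ℝ) := by
    have : ((G (ℓ * x) - ℓ * G x : ℝ) : Circle1) = 0 := by
      rw [AddCircle.coe_sub, ← zsmul_eq_mul, ← zsmul_eq_mul, AddCircle.coe_zsmul, ← hlift,
        ← hlift, AddCircle.coe_zsmul, hcomm.eq, sub_self]
    obtain ⟨n, hn⟩ := (AddCircle.coe_eq_zero_iff 1).mp this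
    exact ⟨n, by rw [← hn, zsmul_one]⟩
  obtain ⟨j, hj⟩ := exists_int_eq_add_div_of_map_mul_sub_mem_range hℓ' hcont hone hG
  refine ⟨_, (Circle1.exists_coe_int_div_eq_iff
    (Int.sub_one_ne_zero_of_two_le_abs hℓ)).mp ⟨j, rfl⟩, fun y => ?_⟩
  obtain ⟨x, rfl⟩ := QuotientAddGroup.mk_surjective y
  rw [hlift, hj, Int.cast_sub, Int.cast_one, add_comm, AddCircle.coe_add]

end IsOrientedLift

theorem Equiv.conj_eq_conj_iff_commute {α : Type*} (e₁ e₂ : α ≃ α) (f : α → α) :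
    (∀ x, e₁.symm (f (e₁ x)) = e₂.symm (f (e₂ x))) ↔ Function.Commute (e₂ ∘ e₁.symm) f := by
  refine ⟨fun h y => ?_, fun h x => ?_⟩
  · simpa using congrArg e₂ (h (e₁.symm y))
  · rw [eq_comm, e₂.symm_apply_eq]
    simpa using (h (e₁ x)).symm

theorem conj_expandingMap_eq_iff {ℓ : ℤ} (hℓ : 2 ≤ |ℓ|) {h₁ h₂ : Circle1 ≃ₜ Circle1}
    (hF₁ : ∃ F, IsOrientedLift h₁ F) (hF₂ : ∃ F, IsOrientedLift h₂ F) :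
    (∀ x, h₁.symm (expandingMap ℓ (h₁ x)) = h₂.symm (expandingMap ℓ (h₂ x))) ↔
      ∃ c : Circle1, (ℓ - 1) • c = 0 ∧ ∀ x, h₂ x = c + h₁ x := by
  refine (Equiv.conj_eq_conj_iff_commute h₁.toEquiv h₂.toEquiv (ℓ • ·)).trans
    ⟨fun hcomm => ?_, ?_⟩
  · obtain ⟨F₁, hF₁⟩ := hF₁
    obtain ⟨F₂, hF₂⟩ := hF₂
    obtain ⟨G₁, hG₁⟩ := hF₁.exists_symm
    obtain ⟨c, hc, hrot⟩ := (hF₂.comp hG₁).exists_rotation_of_commute hℓ hcomm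
    exact ⟨c, hc, fun x => by simpa using hrot (h₁ x)⟩
  · rintro ⟨c, hc, hrot⟩ y
    have hℓc : ℓ • c = c := by rwa [sub_one_zsmul, ← sub_eq_add_neg, sub_eq_zero] at hc
    simp [hrot, smul_add, hℓc]

def conjugatingHomeos (ℓ : ℤ) (f : Circle1 → Circle1) : Set (Circle1 ≃ₜ Circle1) :=
  {h | (∃ F, IsOrientedLift h F) ∧ ∀ x, h.symm (expandingMap ℓ (h x)) = f x}

theorem conjugatingHomeos_eq_image {ℓ : ℤ} (hℓ : 2 ≤ |ℓ|) {f : Circle1 → Circle1}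
    {h₀ : Circle1 ≃ₜ Circle1} (hF₀ : ∃ F, IsOrientedLift h₀ F)
    (hf : ∀ x, f x = h₀.symm (expandingMap ℓ (h₀ x))) :
    conjugatingHomeos ℓ f =
      (fun c => h₀.trans (Homeomorph.addLeft c)) '' {c | (ℓ - 1) • c = 0} := by
  ext h
  simp only [conjugatingHomeos, hf]
  constructor
  · rintro ⟨hF, hconj⟩
    obtain ⟨c, hc, hrot⟩ := (conj_expandingMap_eq_iff hℓ hF₀ hF).mp fun x => (hconj x).symm
    exact ⟨c, hc, Homeomorph.ext fun x => (hrot x).symm⟩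
  · rintro ⟨c, hc, rfl⟩
    obtain ⟨F₀, hF₀⟩ := hF₀
    obtain ⟨t, rfl⟩ := QuotientAddGroup.mk_surjective c
    have hF : IsOrientedLift (h₀.trans (Homeomorph.addLeft (t : Circle1))) (fun x => t + F₀ x) :=
      hF₀.const_add t
    exact ⟨⟨_, hF⟩, fun x => ((conj_expandingMap_eq_iff hℓ ⟨F₀, hF₀⟩ ⟨_, hF⟩).mpr
      ⟨_, hc, fun _ => rfl⟩ x).symm⟩

theorem ncard_conjugatingHomeos {ℓ : ℤ} (hℓ : 2 ≤ |ℓ|) {f : Circle1 → Circle1}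
    {h₀ : Circle1 ≃ₜ Circle1} (hF₀ : ∃ F, IsOrientedLift h₀ F)
    (hf : ∀ x, f x = h₀.symm (expandingMap ℓ (h₀ x))) :
    (conjugatingHomeos ℓ f).ncard = (ℓ - 1).natAbs := by
  have hrot_inj : Injective fun c : Circle1 => h₀.trans (Homeomorph.addLeft c) :=
    fun c c' h => by simpa using congrArg (· (h₀.symm 0)) h
  rw [conjugatingHomeos_eq_image hℓ hF₀ hf, ncard_image_of_injective _ hrot_inj,
    Circle1.ncard_zsmul_eq_zero (Int.sub_one_ne_zero_of_two_le_abs hℓ)]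

/-- Two orientation-preserving homeomorphisms `h₁`, `h₂` conjugate `E_ℓ` to the same map if and
only if they differ by a rotation by a multiple of `1/(ℓ-1)`; consequently every `f ∈ CE_ℓ(S¹)`
is conjugated to `E_ℓ` by exactly `|ℓ - 1|` orientation-preserving homeomorphisms. -/
theorem conjugating_homeos_differ_by_rotation (ℓ : ℤ) (hℓ : 2 ≤ |ℓ|) :
    (∀ h₁ h₂ : Circle1 ≃ₜ Circle1,
      (∃ F, IsOrientedLift (⇑h₁) F) → (∃ F, IsOrientedLift (⇑h₂) F) →
      ((∀ x, h₁.symm (expandingMap ℓ (h₁ x)) = h₂.symm (expandingMap ℓ (h₂ x))) ↔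
        ∃ j : ℤ, ∀ x, h₂ x = (((j : ℝ) / ((ℓ : ℝ) - 1) : ℝ) : Circle1) + h₁ x)) ∧
    ∀ f ∈ CEl ℓ,
      {h : Circle1 ≃ₜ Circle1 | (∃ F, IsOrientedLift (⇑h) F) ∧
        ∀ x, h.symm (expandingMap ℓ (h x)) = f x}.ncard = (ℓ - 1).natAbs := by
  refine ⟨fun h₁ h₂ hF₁ hF₂ => (conj_expandingMap_eq_iff hℓ hF₁ hF₂).trans ?_, ?_⟩
  · have htorsion (c : Circle1) :=
      Circle1.exists_coe_int_div_eq_iff (Int.sub_one_ne_zero_of_two_le_abs hℓ) (c := c)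
    push_cast at htorsion
    constructor
    · rintro ⟨c, hc, hrot⟩
      obtain ⟨j, rfl⟩ := (htorsion c).mpr hc
      exact ⟨j, hrot⟩
    · rintro ⟨j, hrot⟩
      exact ⟨_, (htorsion _).mp ⟨j, rfl⟩, hrot⟩
  · rintro f ⟨h₀, hF₀, hf⟩
    exact ncard_conjugatingHomeos hℓ hF₀ hf
end
end
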